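/- Let k ≥ 1 be an integer and suppose (μ₀;μ) ∈ Γ_k^{∞,−}. Then (−1)^{k+1}·(k+1)·σ_{k+1}^∞(μ₀;μ) ≤ (−1)^{k+1}·σ_1^∞(μ₀;μ)·σ_k^∞(μ₀;μ), and equality holds if and only if μ = 0. -/

import Mathlib

/-- The `m`-th elementary symmetric polynomial in the `n` variables `μ 0, …, μ (n-1)`
(with `σ₀ = 1` and `σ_m = 0` for `m > n`). -/
noncomputable def esymm {n : ℕ} (μ : Fin n → ℝ) (m : ℕ) : ℝ :=
  ∑ s ∈ Finset.powersetCard m (Finset.univ : Finset (Fin n)), ∏ i ∈ s, μ i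

/-- The `k`-th weighted elementary symmetric polynomial
`σ_k^∞(μ₀;μ) = ∑_{j=0}^k (μ₀^j/j!) σ_{k-j}(μ)`. -/
noncomputable def sigmaInf {n : ℕ} (μ₀ : ℝ) (μ : Fin n → ℝ) (k : ℕ) : ℝ :=
  ∑ j ∈ Finset.range (k + 1), μ₀ ^ j / (Nat.factorial j : ℝ) * esymm μ (k - j)

/-!
Put `P_k = ∑_{j ≤ k} σ_{k-j}(μ) X^j / j!`, so that `σ_k^∞(μ₀;μ) = P_k(μ₀)` and `P_{k+1}' = P_k`;
adjoining a variable `a` to `μ` turns `P_{k+1}` into `(1 + a d/dX) P_{k+1}`. These operators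
preserve real-rootedness (Rolle's theorem for `exp (t / a) p(t)` locates all roots but one, and a
real polynomial with all roots but one real splits), so every `P_k` splits over `ℝ` and Laguerre's
inequality `p p'' ≤ p'²` becomes Newton's inequality `P_{k+2} P_k ≤ P_{k+1}²`, for any multiset of
variables. Newton's inequality carries the cone condition over to `μ` with one variable removed,
and the identity `P_1 P_{m+1} - (m+2) P_{m+2} = ∑_i μ_i² P_m(μ without μ_i)` writes the gap in the
claimed inequality as a sum of the `μ_i²` against positive weights.
-/

open Polynomial
open scoped Nat

theorem Multiset.card_le_card_add_one_of_interleaved {α : Type*} [LinearOrder α]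
    {A B : Multiset α} (hcount : ∀ x ∈ A, A.count x ≤ B.count x + 1)
    (hbetween : ∀ x ∈ A, ∀ y ∈ A, x < y → ∃ z ∈ B, x < z ∧ z < y) :
    card A ≤ card B + 1 := by
  classical
  have hgaps : A.toFinset.card ≤ (B.toFinset \ A.toFinset).card + 1 :=
    Finset.card_le_sdiff_of_interleaved fun x hx y hy hxy _ => by
      obtain ⟨z, hz, hxz, hzy⟩ := hbetween x (mem_toFinset.1 hx) y (mem_toFinset.1 hy) hxy
      exact ⟨z, mem_toFinset.2 hz, hxz, hzy⟩
  calc card A = ∑ x ∈ A.toFinset, A.count x := (toFinset_sum_count_eq A).symm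
    _ ≤ ∑ x ∈ A.toFinset, (B.count x + 1) :=
      Finset.sum_le_sum fun x hx => hcount x (mem_toFinset.1 hx)
    _ = ∑ x ∈ A.toFinset, B.count x + A.toFinset.card := by
      rw [Finset.sum_add_distrib, Finset.card_eq_sum_ones]
    _ ≤ ∑ x ∈ A.toFinset, B.count x + (∑ x ∈ B.toFinset \ A.toFinset, B.count x + 1) := by
      grw [hgaps, Finset.card_eq_sum_ones]
      gcongr with x hx
      exact count_pos.2 (mem_toFinset.1 (Finset.mem_sdiff.1 hx).1)
    _ = card B + 1 := by
      rw [← add_assoc, ← Finset.sum_union Finset.disjoint_sdiff,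
        sum_count_eq_card fun a ha => by simp [ha]]

namespace Polynomial

theorem natDegree_add_C_mul_derivative {R : Type*} [Semiring R] (p : R[X]) (c : R) :
    (p + C c * derivative p).natDegree = p.natDegree := by
  by_cases hp : p.natDegree = 0
  · rw [eq_C_of_natDegree_eq_zero hp, derivative_C, mul_zero, add_zero]
  · exact natDegree_add_eq_left_of_natDegree_lt
      ((natDegree_C_mul_le _ _).trans_lt (natDegree_derivative_lt hp))

theorem splits_of_natDegree_le_card_roots_add_one {K : Type*} [Field K] {p : K[X]}
    (hp : p.natDegree ≤ Multiset.card p.roots + 1) : p.Splits := by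
  rcases eq_or_ne p 0 with rfl | hp0
  · exact Splits.zero
  obtain ⟨q, hq⟩ := prod_multiset_X_sub_C_dvd p
  have hq0 : q ≠ 0 := by
    rintro rfl
    exact hp0 (hq.trans (mul_zero _))
  have hdeg := congrArg natDegree hq
  rw [natDegree_mul (monic_multiset_prod_of_monic _ _ fun a _ => monic_X_sub_C a).ne_zero hq0,
    natDegree_multiset_prod_X_sub_C_eq_card] at hdeg
  rw [hq]
  refine (Splits.multisetProd ?_).mul (Splits.of_natDegree_le_one (by omega))
  simp only [Multiset.mem_map]
  rintro _ ⟨a, -, rfl⟩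
  exact Splits.X_sub_C a

theorem hasDerivAt_exp_div_mul_eval (p : ℝ[X]) {c : ℝ} (hc : c ≠ 0) (t : ℝ) :
    HasDerivAt (fun t => Real.exp (t / c) * p.eval t)
      (Real.exp (t / c) / c * (p + C c * derivative p).eval t) t := by
  refine (((hasDerivAt_id t).div_const c).exp.mul (p.hasDerivAt t)).congr_deriv ?_
  simp only [eval_add, eval_mul, eval_C, id]
  field_simp

theorem card_roots_le_card_roots_add_C_mul_derivative_add_one (p : ℝ[X]) (c : ℝ) :
    Multiset.card p.roots ≤ Multiset.card (p + C c * derivative p).roots + 1 := by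
  classical
  rcases eq_or_ne c 0 with rfl | hc
  · simp
  rcases eq_or_ne p.natDegree 0 with hp | hp
  · rw [eq_C_of_natDegree_eq_zero hp]
    simp
  have hp0 : p ≠ 0 := by
    rintro rfl
    simp at hp
  have hh0 : p + C c * derivative p ≠ 0 := fun h0 =>
    hp (by rw [← natDegree_add_C_mul_derivative p c, h0, natDegree_zero])
  apply Multiset.card_le_card_add_one_of_interleaved
  · intro x _
    have hdvd : (X - C x) ^ (p.rootMultiplicity x - 1) ∣ p + C c * derivative p :=
      dvd_add ((pow_dvd_pow _ (Nat.sub_le _ _)).trans (pow_rootMultiplicity_dvd p x))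
        (((pow_dvd_pow _ (rootMultiplicity_sub_one_le_derivative_rootMultiplicity p x)).trans
          (pow_rootMultiplicity_dvd _ x)).mul_left _)
    have := (le_rootMultiplicity_iff hh0).2 hdvd
    rw [count_roots, count_roots]
    omega
  · intro x hx y hy hxy
    rw [mem_roots hp0] at hx hy
    obtain ⟨z, hz, hdz⟩ := exists_hasDerivAt_eq_zero hxy (by fun_prop)
      (by simp [hx.eq_zero, hy.eq_zero]) fun t _ => p.hasDerivAt_exp_div_mul_eval hc t
    refine ⟨z, (mem_roots hh0).2 ?_, hz⟩
    simpa [hc, Real.exp_ne_zero] using hdz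

theorem Splits.add_C_mul_derivative {p : ℝ[X]} (hp : p.Splits) (c : ℝ) :
    (p + C c * derivative p).Splits :=
  splits_of_natDegree_le_card_roots_add_one <| by
    rw [natDegree_add_C_mul_derivative, hp.natDegree_eq_card_roots]
    exact p.card_roots_le_card_roots_add_C_mul_derivative_add_one c

theorem eval_mul_eval_derivative_derivative_le_sq_of_X_sub_C_mul {q : ℝ[X]} {x : ℝ} (a : ℝ)
    (hq : q.eval x * (derivative (derivative q)).eval x ≤ (derivative q).eval x ^ 2) :
    ((X - C a) * q).eval x * (derivative (derivative ((X - C a) * q))).eval x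
      ≤ (derivative ((X - C a) * q)).eval x ^ 2 := by
  -- the right side minus the left side is `q(x)² + (x - a)² (q'(x)² - q(x) q''(x))`
  simp only [derivative_mul, derivative_sub, derivative_X, derivative_C, sub_zero, one_mul,
    derivative_add, eval_add, eval_mul, eval_sub, eval_X, eval_C]
  nlinarith [sq_nonneg (q.eval x), mul_nonneg (sq_nonneg (x - a)) (sub_nonneg.2 hq)]

theorem Splits.eval_mul_eval_derivative_derivative_le_sq {p : ℝ[X]} (hp : p.Splits) (x : ℝ) :
    p.eval x * (derivative (derivative p)).eval x ≤ (derivative p).eval x ^ 2 := by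
  rw [hp.eq_prod_roots]
  generalize p.leadingCoeff = c
  induction p.roots using Multiset.induction_on with
  | empty => simp
  | cons a s ih =>
    rw [Multiset.map_cons, Multiset.prod_cons, mul_left_comm]
    exact eval_mul_eval_derivative_derivative_le_sq_of_X_sub_C_mul a ih

end Polynomial

theorem pos_of_sub_mul_pos_of_mul_le_sq {a A₀ A₁ A₂ : ℝ} (h₀ : 0 < A₀)
    (h₁ : 0 < A₁ - a * A₀) (h₂ : 0 < A₂ - a * A₁) (hN : A₂ * A₀ ≤ A₁ ^ 2) : 0 < A₁ := by
  by_contra! hA₁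
  nlinarith [mul_pos h₂ h₀, mul_nonneg (neg_nonneg.2 hA₁) h₁.le]

theorem Fintype.sum_sq_mul_eq_zero_iff {ι : Type*} [Fintype ι] {x w : ι → ℝ}
    (hw : ∀ i, 0 < w i) : ∑ i, x i ^ 2 * w i = 0 ↔ x = 0 := by
  rw [Finset.sum_eq_zero_iff_of_nonneg fun i _ => mul_nonneg (sq_nonneg _) (hw i).le]
  simp [funext_iff, (hw _).ne']

namespace Multiset

theorem esymm_cons_succ {R : Type*} [CommSemiring R] (a : R) (s : Multiset R) (n : ℕ) :
    (a ::ₘ s).esymm (n + 1) = s.esymm (n + 1) + a * s.esymm n := by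
  simp only [esymm, powersetCard_cons, map_add, sum_add, map_map, Function.comp_def, prod_cons,
    sum_map_mul_left]

@[simp]
theorem esymm_zero_right {R : Type*} [CommSemiring R] (s : Multiset R) : s.esymm 0 = 1 := by
  simp [esymm, powersetCard_zero_left]

@[simp]
theorem esymm_zero_left_succ {R : Type*} [CommSemiring R] (n : ℕ) :
    (0 : Multiset R).esymm (n + 1) = 0 := by
  simp [esymm, powersetCard_zero_right]

variable {K : Type*} [Field K]

/-- `P_k` in the variables `s`; its value at `μ₀` is `σ_k^∞(μ₀; s)`. -/
noncomputable def weightedEsymmPoly (s : Multiset K) (k : ℕ) : K[X] :=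
  ∑ j ∈ Finset.range (k + 1), C (s.esymm (k - j) / j !) * X ^ j

theorem coeff_weightedEsymmPoly (s : Multiset K) (k j : ℕ) :
    (s.weightedEsymmPoly k).coeff j = if j ≤ k then s.esymm (k - j) / j ! else 0 := by
  simp [weightedEsymmPoly, coeff_C_mul, coeff_X_pow]

@[simp]
theorem weightedEsymmPoly_zero_right (s : Multiset K) : s.weightedEsymmPoly 0 = 1 := by
  simp [weightedEsymmPoly]

theorem weightedEsymmPoly_zero_left (k : ℕ) :
    (0 : Multiset K).weightedEsymmPoly k = C (k ! : K)⁻¹ * X ^ k := by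
  ext j
  rw [coeff_weightedEsymmPoly, coeff_C_mul_X_pow]
  rcases lt_trichotomy j k with h | rfl | h
  · obtain ⟨m, hm⟩ : ∃ m, k - j = m + 1 := ⟨k - j - 1, by omega⟩
    simp [h.le, h.ne, hm]
  · simp
  · simp [h.not_ge, h.ne']

theorem derivative_weightedEsymmPoly_succ [CharZero K] (s : Multiset K) (k : ℕ) :
    derivative (s.weightedEsymmPoly (k + 1)) = s.weightedEsymmPoly k := by
  ext j
  rw [coeff_derivative, coeff_weightedEsymmPoly, coeff_weightedEsymmPoly]
  split_ifs
  · rw [Nat.add_sub_add_right, Nat.factorial_succ, Nat.cast_mul]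
    field_simp
    push_cast
    ring
  · omega
  · omega
  · simp

theorem weightedEsymmPoly_cons_succ (a : K) (s : Multiset K) (k : ℕ) :
    (a ::ₘ s).weightedEsymmPoly (k + 1) =
      s.weightedEsymmPoly (k + 1) + C a * s.weightedEsymmPoly k := by
  ext j
  rw [coeff_add, coeff_C_mul, coeff_weightedEsymmPoly, coeff_weightedEsymmPoly,
    coeff_weightedEsymmPoly]
  split_ifs <;> try omega
  · rw [show k + 1 - j = k - j + 1 by omega, esymm_cons_succ]
    ring
  · rw [show j = k + 1 by omega]
    simp
  · simp

theorem weightedEsymmPoly_one_mul_sub [CharZero K] [DecidableEq K] (s : Multiset K) (k : ℕ) :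
    s.weightedEsymmPoly 1 * s.weightedEsymmPoly (k + 1)
        - ((k : K[X]) + 2) * s.weightedEsymmPoly (k + 2)
      = (s.map fun a => C a ^ 2 * (s.erase a).weightedEsymmPoly k).sum := by
  induction s using Multiset.induction_on generalizing k with
  | empty =>
    have hfact : ((k + 1) ! : K)⁻¹ = ((k + 2 : ℕ) : K) * ((k + 2) ! : K)⁻¹ := by
      rw [Nat.factorial_succ (k + 1), Nat.cast_mul, mul_inv, ← mul_assoc,
        mul_inv_cancel₀ (Nat.cast_ne_zero.2 (Nat.succ_ne_zero _)), one_mul]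
    simp only [weightedEsymmPoly_zero_left, Nat.factorial_one, Nat.cast_one, inv_one, map_one,
      one_mul, hfact, map_mul, map_natCast, map_zero, sum_zero]
    push_cast
    ring
  | cons a s ih =>
    rw [map_cons, sum_cons, erase_cons_head]
    cases k with
    | zero =>
      have h0 := ih 0
      rw [weightedEsymmPoly_cons_succ, weightedEsymmPoly_cons_succ]
      simp only [weightedEsymmPoly_zero_right, mul_one, zero_add] at h0 ⊢
      push_cast at h0 ⊢
      linear_combination h0
    | succ m =>
      have hsum : (s.map fun b => C b ^ 2 * ((a ::ₘ s).erase b).weightedEsymmPoly (m + 1)).sum =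
          (s.map fun b => C b ^ 2 * (s.erase b).weightedEsymmPoly (m + 1)).sum +
            C a * (s.map fun b => C b ^ 2 * (s.erase b).weightedEsymmPoly m).sum := by
        rw [← sum_map_mul_left, ← sum_map_add]
        refine congrArg sum (map_congr rfl fun b hb => ?_)
        rw [erase_cons_tail_of_mem hb, weightedEsymmPoly_cons_succ]
        ring
      rw [hsum, ← ih (m + 1), ← ih m, weightedEsymmPoly_cons_succ, weightedEsymmPoly_cons_succ,
        weightedEsymmPoly_cons_succ]
      simp only [weightedEsymmPoly_zero_right, add_assoc, Nat.reduceAdd]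
      push_cast
      ring

theorem splits_weightedEsymmPoly (s : Multiset ℝ) (k : ℕ) : (s.weightedEsymmPoly k).Splits := by
  induction s using Multiset.induction_on with
  | empty =>
    rw [weightedEsymmPoly_zero_left]
    exact Splits.C_mul_X_pow _ _
  | cons a s ih =>
    cases k with
    | zero => simp
    | succ k =>
      rw [weightedEsymmPoly_cons_succ, ← derivative_weightedEsymmPoly_succ s k]
      exact ih.add_C_mul_derivative a

theorem eval_weightedEsymmPoly_mul_le_sq (s : Multiset ℝ) (k : ℕ) (x : ℝ) :
    (s.weightedEsymmPoly (k + 2)).eval x * (s.weightedEsymmPoly k).eval x ≤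
      (s.weightedEsymmPoly (k + 1)).eval x ^ 2 := by
  have := (splits_weightedEsymmPoly s (k + 2)).eval_mul_eval_derivative_derivative_le_sq x
  rwa [derivative_weightedEsymmPoly_succ, derivative_weightedEsymmPoly_succ] at this

theorem signed_eval_weightedEsymmPoly_pos_of_cons {a x : ℝ} {s : Multiset ℝ} {k : ℕ}
    (hcone : ∀ j ∈ Finset.Icc 1 (k + 1), 0 < (-1) ^ j * ((a ::ₘ s).weightedEsymmPoly j).eval x)
    {j : ℕ} (hj : j ≤ k) : 0 < (-1) ^ j * (s.weightedEsymmPoly j).eval x := by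
  set A : ℕ → ℝ := fun i => (-1) ^ i * (s.weightedEsymmPoly i).eval x with hA
  have hcons (i : ℕ) :
      (-1) ^ (i + 1) * ((a ::ₘ s).weightedEsymmPoly (i + 1)).eval x = A (i + 1) - a * A i := by
    simp only [hA, weightedEsymmPoly_cons_succ, eval_add, eval_mul, eval_C, pow_succ]
    ring
  have hnewton (i : ℕ) : A (i + 2) * A i ≤ A (i + 1) ^ 2 := by
    have hsq : ((-1 : ℝ) ^ i) ^ 2 = 1 := by rw [← pow_mul, mul_comm, pow_mul, neg_one_sq, one_pow]
    calc A (i + 2) * A i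
        = ((-1) ^ i) ^ 2 *
            ((s.weightedEsymmPoly (i + 2)).eval x * (s.weightedEsymmPoly i).eval x) := by
          simp only [hA]
          ring
      _ ≤ ((-1) ^ i) ^ 2 * (s.weightedEsymmPoly (i + 1)).eval x ^ 2 := by
          rw [hsq, one_mul, one_mul]
          exact eval_weightedEsymmPoly_mul_le_sq s i x
      _ = A (i + 1) ^ 2 := by
          simp only [hA]
          ring
  induction j with
  | zero => simp
  | succ j ih =>
    refine pos_of_sub_mul_pos_of_mul_le_sq (a := a) (ih (by omega)) ?_ ?_ (hnewton j)
    · rw [← hcons]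
      exact hcone (j + 1) (Finset.mem_Icc.2 ⟨by omega, by omega⟩)
    · rw [← hcons]
      exact hcone (j + 2) (Finset.mem_Icc.2 ⟨by omega, by omega⟩)

end Multiset

theorem sigmaInf_eq_eval_weightedEsymmPoly {n : ℕ} (μ₀ : ℝ) (μ : Fin n → ℝ) (k : ℕ) :
    sigmaInf μ₀ μ k = ((Finset.univ.val.map μ).weightedEsymmPoly k).eval μ₀ := by
  simp only [sigmaInf, Multiset.weightedEsymmPoly, eval_finsetSum, eval_mul, eval_C, eval_pow,
    eval_X, Finset.esymm_map_val, esymm]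
  exact Finset.sum_congr rfl fun j _ => by ring

theorem sigmaInf_one_mul_sub {n : ℕ} (μ₀ : ℝ) (μ : Fin n → ℝ) (m : ℕ) :
    sigmaInf μ₀ μ 1 * sigmaInf μ₀ μ (m + 1) - (m + 2) * sigmaInf μ₀ μ (m + 2) =
      ∑ i, μ i ^ 2 * (((Finset.univ.val.map μ).erase (μ i)).weightedEsymmPoly m).eval μ₀ := by
  have := congrArg (eval μ₀) (Multiset.weightedEsymmPoly_one_mul_sub (Finset.univ.val.map μ) m)
  simp only [eval_sub, eval_mul, eval_add, eval_natCast, eval_ofNat, Multiset.map_map,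
    Function.comp_def, Finset.sum_map_val, eval_finsetSum, eval_pow, eval_C] at this
  simpa only [sigmaInf_eq_eval_weightedEsymmPoly] using this

/-- If `(μ₀;μ)` lies in the negative weighted elliptic `k`-cone, then
`(-1)^{k+1} (k+1) σ_{k+1}^∞(μ₀;μ) ≤ (-1)^{k+1} σ_1^∞(μ₀;μ) σ_k^∞(μ₀;μ)`,
with equality if and only if `μ = 0`. -/
theorem weighted_newton_cone_inequality {n : ℕ} (k : ℕ) (hk : 1 ≤ k) (μ₀ : ℝ) (μ : Fin n → ℝ)
    (hcone : ∀ j ∈ Finset.Icc 1 k, (-1 : ℝ) ^ j * sigmaInf μ₀ μ j > 0) :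
    (-1 : ℝ) ^ (k + 1) * ((k : ℝ) + 1) * sigmaInf μ₀ μ (k + 1)
        ≤ (-1 : ℝ) ^ (k + 1) * (sigmaInf μ₀ μ 1 * sigmaInf μ₀ μ k)
      ∧ ((-1 : ℝ) ^ (k + 1) * ((k : ℝ) + 1) * sigmaInf μ₀ μ (k + 1)
          = (-1 : ℝ) ^ (k + 1) * (sigmaInf μ₀ μ 1 * sigmaInf μ₀ μ k) ↔ μ = 0) := by
  obtain ⟨m, rfl⟩ : ∃ m, k = m + 1 := ⟨k - 1, by omega⟩
  set w : Fin n → ℝ := fun i =>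
    (-1) ^ m * (((Finset.univ.val.map μ).erase (μ i)).weightedEsymmPoly m).eval μ₀
  have hw (i : Fin n) : 0 < w i := by
    refine Multiset.signed_eval_weightedEsymmPoly_pos_of_cons (a := μ i) (fun j hj => ?_) le_rfl
    rw [Multiset.cons_erase (Multiset.mem_map_of_mem μ (Finset.mem_univ i)),
      ← sigmaInf_eq_eval_weightedEsymmPoly]
    exact hcone j hj
  have hgap : (-1) ^ m * (sigmaInf μ₀ μ 1 * sigmaInf μ₀ μ (m + 1)
      - (m + 2) * sigmaInf μ₀ μ (m + 2)) = ∑ i, μ i ^ 2 * w i := by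
    rw [sigmaInf_one_mul_sub, Finset.mul_sum]
    exact Finset.sum_congr rfl fun i _ => by ring
  have hgap_nonneg : 0 ≤ ∑ i, μ i ^ 2 * w i :=
    Finset.sum_nonneg fun i _ => mul_nonneg (sq_nonneg _) (hw i).le
  rw [← hgap] at hgap_nonneg
  rw [← Fintype.sum_sq_mul_eq_zero_iff hw, ← hgap,
    show (-1 : ℝ) ^ (m + 1 + 1) = (-1) ^ m by ring]
  push_cast
  exact ⟨by linear_combination hgap_nonneg, fun h => by linear_combination -h,
    fun h => by linear_combination -h⟩
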